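/- Let H ∈ (1/2,1), T > 0 and 1 ≤ p < 1/(2−2H). There is a constant C = C(H,p,T) such that for all ε,δ ∈ (0,1): ∫_{Δ¹_T(ε,δ)} |G(ε,δ;s,t)/(εδ)|^p ds dt ≤ C (ε∧δ)^{(2H−2)p+1}; in particular, since (2H−2)p + 1 > 0, this integral tends to 0 as (ε,δ) ↓ 0, where Δ¹_T(ε,δ) := {(s,t) : 0 < s < t ≤ T, s > max(t − (ε∧δ), 0)} ∪ {(s,t) : 0 < s < t ≤ T, s ≤ ε∧δ}. -/

import Mathlib

open Real Set MeasureTheory Filter Topology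

noncomputable section

/-- `G(ε,δ;s,t) = (1/2)(|t−s−ε|^{2H} + |t−s+δ|^{2H} − |t−s+δ−ε|^{2H} − |t−s|^{2H})`,
which equals `E[B_{s,s+ε} B_{t,t+δ}]` for a 1-dimensional fBm with Hurst parameter `H`. -/
def Gcov (H ε δ s t : ℝ) : ℝ :=
  (|t - s - ε| ^ (2*H) + |t - s + δ| ^ (2*H)
    - |t - s + δ - ε| ^ (2*H) - |t - s| ^ (2*H)) / 2

/-- `Δ¹_T(ε,δ) = {0<s<t≤T, s > max(t−ε∧δ,0)} ∪ {0<s<t≤T, s ≤ ε∧δ}` as a subset of `ℝ²`. -/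
def diagSet (T ε δ : ℝ) : Set (ℝ × ℝ) :=
  {p | 0 < p.1 ∧ p.1 < p.2 ∧ p.2 ≤ T ∧ max (p.2 - min ε δ) 0 < p.1}
  ∪ {p | 0 < p.1 ∧ p.1 < p.2 ∧ p.2 ≤ T ∧ p.1 ≤ min ε δ}

end

/-! ### Auxiliary lemmas -/

private lemma rpow_add_le' {α x y : ℝ} (hα0 : 0 ≤ α) (hα1 : α ≤ 1) (hx : 0 ≤ x) (hy : 0 ≤ y) :
    (x + y) ^ α ≤ x ^ α + y ^ α := by
  lift x to NNReal using hx
  lift y to NNReal using hy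
  have := NNReal.rpow_add_le_add_rpow x y hα0 hα1
  exact_mod_cast this

private lemma rpow_sub_le' {α x y : ℝ} (hα0 : 0 ≤ α) (hα1 : α ≤ 1) (hy : 0 ≤ y) (hxy : y ≤ x) :
    x ^ α - y ^ α ≤ (x - y) ^ α := by
  have h1 : 0 ≤ x - y := sub_nonneg.2 hxy
  have h2 := rpow_add_le' hα0 hα1 hy h1
  have h3 : y + (x - y) = x := by ring
  rw [h3] at h2
  linarith

private lemma sp_nonneg_eq {α : ℝ} (hα : α ≠ 0) {x : ℝ} (hx : 0 ≤ x) :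
    x * |x| ^ (α - 1) = x ^ α := by
  rcases hx.eq_or_lt with h | h
  · simp [← h, Real.zero_rpow hα]
  · rw [abs_of_pos h]
    calc x * x ^ (α - 1) = x ^ (1:ℝ) * x ^ (α - 1) := by rw [Real.rpow_one]
      _ = x ^ (1 + (α - 1)) := (Real.rpow_add h 1 (α - 1)).symm
      _ = x ^ α := by ring_nf

private lemma sp_holder' {α : ℝ} (hα0 : 0 < α) (hα1 : α ≤ 1) (x y : ℝ) :
    |x * |x| ^ (α - 1) - y * |y| ^ (α - 1)| ≤ 2 * |x - y| ^ α := by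
  have hα : α ≠ 0 := hα0.ne'
  wlog hxy : y ≤ x with Hw
  · have := Hw hα0 hα1 y x hα (le_of_not_ge hxy)
    rwa [abs_sub_comm y x, abs_sub_comm (y * |y| ^ (α - 1))] at this
  have hd : 0 ≤ x - y := sub_nonneg.2 hxy
  rw [abs_of_nonneg hd]
  rcases le_or_gt 0 y with hy | hy
  · have hx : (0:ℝ) ≤ x := hy.trans hxy
    rw [sp_nonneg_eq hα hx, sp_nonneg_eq hα hy]
    have h1 : x ^ α - y ^ α ≤ (x - y) ^ α := rpow_sub_le' hα0.le hα1 hy hxy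
    have h2 : 0 ≤ x ^ α - y ^ α := sub_nonneg.2 (Real.rpow_le_rpow hy hxy hα0.le)
    rw [abs_of_nonneg h2]
    nlinarith [Real.rpow_nonneg hd α]
  · rcases le_or_gt 0 x with hx | hx
    · -- y < 0 ≤ x
      have hyy : y * |y| ^ (α - 1) = -((-y) ^ α) := by
        rw [← sp_nonneg_eq hα (neg_nonneg.2 hy.le), abs_neg]; ring
      rw [sp_nonneg_eq hα hx, hyy, sub_neg_eq_add]
      have h1 : x ^ α ≤ (x - y) ^ α := Real.rpow_le_rpow hx (by linarith) hα0.le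
      have h2 : (-y) ^ α ≤ (x - y) ^ α :=
        Real.rpow_le_rpow (by linarith) (by linarith) hα0.le
      have h3 : 0 ≤ x ^ α + (-y) ^ α := by
        have := Real.rpow_nonneg hx α
        have := Real.rpow_nonneg (neg_nonneg.2 hy.le) α
        linarith
      rw [abs_of_nonneg h3]; linarith
    · -- y ≤ x < 0
      have hxx : x * |x| ^ (α - 1) = -((-x) ^ α) := by
        rw [← sp_nonneg_eq hα (neg_nonneg.2 hx.le), abs_neg]; ring
      have hyy : y * |y| ^ (α - 1) = -((-y) ^ α) := by
        rw [← sp_nonneg_eq hα (neg_nonneg.2 hy.le), abs_neg]; ring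
      rw [hxx, hyy]
      have hyx : (0:ℝ) ≤ -x := by linarith
      have h1 : (-y) ^ α - (-x) ^ α ≤ ((-y) - (-x)) ^ α :=
        rpow_sub_le' hα0.le hα1 hyx (by linarith)
      have h2 : 0 ≤ (-y) ^ α - (-x) ^ α :=
        sub_nonneg.2 (Real.rpow_le_rpow hyx (by linarith) hα0.le)
      have h4 : (-y) - (-x) = x - y := by ring
      rw [h4] at h1
      rw [show -((-x) ^ α) - -((-y) ^ α) = (-y) ^ α - (-x) ^ α by ring, abs_of_nonneg h2]
      nlinarith [Real.rpow_nonneg hd α]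

private lemma second_diff' {H : ℝ} (hH : H ∈ Set.Ioo (1/2 : ℝ) 1) (a b c : ℝ) :
    |(|a + b + c| ^ (2*H) - |a + b| ^ (2*H) - |a + c| ^ (2*H) + |a| ^ (2*H))|
      ≤ (4 * H * |c| ^ (2*H - 1)) * |b| := by
  obtain ⟨hH1, hH2⟩ := hH
  have hq : 1 < 2*H := by linarith
  set F : ℝ → ℝ := fun x => |x + c| ^ (2*H) - |x| ^ (2*H) with hF
  set F' : ℝ → ℝ :=
    fun x => (2*H) * |x + c| ^ (2*H - 2) * (x + c) - (2*H) * |x| ^ (2*H - 2) * x with hF'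
  have hder : ∀ x, HasDerivAt F (F' x) x := by
    intro x
    have h1 : HasDerivAt (fun y : ℝ => |y + c| ^ (2*H))
        ((2*H) * |x + c| ^ (2*H - 2) * (x + c)) x := by
      have hy : HasDerivAt (fun y : ℝ => y + c) 1 x := (hasDerivAt_id x).add_const c
      have := (hasDerivAt_abs_rpow (x + c) hq).comp x hy
      rw [mul_one] at this
      exact this
    exact h1.sub (hasDerivAt_abs_rpow x hq)
  have hbound : ∀ x, ‖F' x‖ ≤ (2*H) * (2 * |c| ^ (2*H - 1)) := by
    intro x
    have h := sp_holder' (α := 2*H - 1) (by linarith) (by linarith) (x + c) x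
    rw [show x + c - x = c by ring] at h
    have : F' x = (2*H) * ((x + c) * |x + c| ^ ((2*H - 1) - 1) - x * |x| ^ ((2*H - 1) - 1)) := by
      rw [hF']; ring_nf
    rw [Real.norm_eq_abs, this, abs_mul, abs_of_nonneg (by linarith : (0:ℝ) ≤ 2*H)]
    exact mul_le_mul_of_nonneg_left h (by linarith)
  have hmvt := Convex.norm_image_sub_le_of_norm_hasDerivWithin_le
    (fun x _ => (hder x).hasDerivWithinAt) (fun x _ => hbound x) convex_univ
    (Set.mem_univ a) (Set.mem_univ (a + b))
  have he : F (a + b) - F a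
      = |a + b + c| ^ (2*H) - |a + b| ^ (2*H) - |a + c| ^ (2*H) + |a| ^ (2*H) := by
    rw [hF]; ring_nf
  rw [he, Real.norm_eq_abs, show a + b - a = b by ring, Real.norm_eq_abs] at hmvt
  calc |_| ≤ 2*H * (2 * |c| ^ (2*H-1)) * |b| := hmvt
    _ = (4 * H * |c| ^ (2*H - 1)) * |b| := by ring

private lemma Gcov_div_le' {H : ℝ} (hH : H ∈ Set.Ioo (1/2 : ℝ) 1) {ε δ : ℝ}
    (hε : 0 < ε) (hδ : 0 < δ) (s t : ℝ) :
    |Gcov H ε δ s t / (ε * δ)| ≤ (2 * H) * (min ε δ) ^ (2*H - 2) := by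
  set X : ℝ := |t - s + δ| ^ (2*H) - |t - s| ^ (2*H) - |t - s + δ - ε| ^ (2*H)
      + |t - s - ε| ^ (2*H) with hX
  have hGX : Gcov H ε δ s t = X / 2 := by rw [Gcov, hX]; ring
  have h1 : |X| ≤ (4 * H * |δ| ^ (2*H - 1)) * |ε| := by
    have := second_diff' hH (t - s - ε) ε δ
    rw [show t - s - ε + ε + δ = t - s + δ by ring, show t - s - ε + ε = t - s by ring,
      show t - s - ε + δ = t - s + δ - ε by ring] at this
    exact this
  have h2 : |X| ≤ (4 * H * |ε| ^ (2*H - 1)) * |δ| := by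
    have := second_diff' hH (t - s - ε) δ ε
    rw [show t - s - ε + δ + ε = t - s + δ by ring, show t - s - ε + δ = t - s + δ - ε by ring,
      show t - s - ε + ε = t - s by ring] at this
    calc |X| = |(|t - s + δ| ^ (2*H) - |t - s + δ - ε| ^ (2*H) - |t - s| ^ (2*H)
        + |t - s - ε| ^ (2*H))| := by rw [hX]; ring_nf
      _ ≤ _ := this
  have hεδ : (0:ℝ) < ε * δ := mul_pos hε hδ
  rw [abs_div, abs_of_pos hεδ, div_le_iff₀ hεδ, hGX]
  have habs : |X / 2| = |X| / 2 := by rw [abs_div]; norm_num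
  rw [habs]
  rcases le_total ε δ with hle | hle
  · -- min = ε ; use h2
    rw [min_eq_left hle]
    have hsplit : ε ^ (2*H - 1) = ε ^ (2*H - 2) * ε := by
      rw [show 2*H - 1 = (2*H - 2) + 1 by ring, Real.rpow_add_one hε.ne']
    have h2' : |X| ≤ 4 * H * (ε ^ (2*H - 2) * ε) * δ := by
      rw [← hsplit]
      calc |X| ≤ (4 * H * |ε| ^ (2*H - 1)) * |δ| := h2
        _ = 4 * H * ε ^ (2*H - 1) * δ := by rw [abs_of_pos hε, abs_of_pos hδ]
    have hH0 : (0:ℝ) < H := by have := hH.1; linarith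
    nlinarith [Real.rpow_nonneg (le_of_lt hε) (2*H-2)]
  · rw [min_eq_right hle]
    have hsplit : δ ^ (2*H - 1) = δ ^ (2*H - 2) * δ := by
      rw [show 2*H - 1 = (2*H - 2) + 1 by ring, Real.rpow_add_one hδ.ne']
    have h1' : |X| ≤ 4 * H * (δ ^ (2*H - 2) * δ) * ε := by
      rw [← hsplit]
      calc |X| ≤ (4 * H * |δ| ^ (2*H - 1)) * |ε| := h1
        _ = 4 * H * δ ^ (2*H - 1) * ε := by rw [abs_of_pos hε, abs_of_pos hδ]
    have hH0 : (0:ℝ) < H := by have := hH.1; linarith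
    nlinarith [Real.rpow_nonneg (le_of_lt hδ) (2*H-2)]

private lemma diagSet_vol' {T ε δ : ℝ} {m : ℝ} (hm : m = min ε δ) (hm0 : 0 < m) (hT : 0 < T) :
    volume (diagSet T ε δ) ≤ ENNReal.ofReal (2 * T * m) := by
  set SA : Set (ℝ × ℝ) := {q : ℝ × ℝ | (0 < q.1 ∧ q.1 < T) ∧ q.1 < q.2 ∧ q.2 < q.1 + m}
    with hSA
  have hSAm : MeasurableSet SA := by
    apply MeasurableSet.inter
    · exact ((measurableSet_lt measurable_const measurable_fst).inter
        (measurableSet_lt measurable_fst measurable_const))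
    · exact ((measurableSet_lt measurable_fst measurable_snd).inter
        (measurableSet_lt measurable_snd (measurable_fst.add measurable_const)))
  have hsub : diagSet T ε δ ⊆ SA ∪ (Set.Ioc 0 m ×ˢ Set.Ioc 0 T) := by
    rintro ⟨s, t⟩ (⟨h1, h2, h3, h4⟩ | ⟨h1, h2, h3, h4⟩)
    · left
      refine ⟨⟨h1, lt_of_lt_of_le h2 h3⟩, h2, ?_⟩
      have : t - m ≤ max (t - min ε δ) 0 := by rw [← hm]; exact le_max_left _ _
      have := lt_of_le_of_lt this h4
      simpa using by linarith
    · right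
      exact ⟨⟨h1, by rw [hm]; exact h4⟩, lt_trans h1 h2, h3⟩
  have hSAvol : volume SA ≤ ENNReal.ofReal m * ENNReal.ofReal T := by
    rw [MeasureTheory.Measure.volume_eq_prod, MeasureTheory.Measure.prod_apply hSAm]
    apply le_of_eq
    have hslice : ∀ s : ℝ, volume (Prod.mk s ⁻¹' SA)
        = (Set.Ioo (0:ℝ) T).indicator (fun _ => ENNReal.ofReal m) s := by
      intro s
      by_cases hs : s ∈ Set.Ioo (0:ℝ) T
      · have hpre : Prod.mk s ⁻¹' SA = Set.Ioo s (s + m) := by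
          ext t
          simp only [hSA, Set.mem_preimage, Set.mem_setOf_eq, Set.mem_Ioo]
          exact ⟨fun h => h.2, fun h => ⟨⟨hs.1, hs.2⟩, h⟩⟩
        rw [hpre, Real.volume_Ioo, Set.indicator_of_mem hs]
        congr 1; ring
      · have hpre : Prod.mk s ⁻¹' SA = ∅ := by
          ext t
          simp only [hSA, Set.mem_preimage, Set.mem_setOf_eq, Set.mem_empty_iff_false,
            iff_false]
          rintro ⟨h1, _⟩
          exact hs ⟨h1.1, h1.2⟩
        rw [hpre, Set.indicator_of_notMem hs]
        simp
    calc ∫⁻ s, volume (Prod.mk s ⁻¹' SA) = ∫⁻ s, (Set.Ioo (0:ℝ) T).indicator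
          (fun _ => ENNReal.ofReal m) s := by
          exact lintegral_congr hslice
      _ = ENNReal.ofReal m * volume (Set.Ioo (0:ℝ) T) := by
          rw [MeasureTheory.lintegral_indicator measurableSet_Ioo]
          simp [mul_comm]
      _ = ENNReal.ofReal m * ENNReal.ofReal T := by rw [Real.volume_Ioo]; norm_num
  have hBvol : volume (Set.Ioc (0:ℝ) m ×ˢ Set.Ioc (0:ℝ) T)
      = ENNReal.ofReal m * ENNReal.ofReal T := by
    rw [MeasureTheory.Measure.volume_eq_prod, MeasureTheory.Measure.prod_prod,
      Real.volume_Ioc, Real.volume_Ioc]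
    norm_num
  calc volume (diagSet T ε δ) ≤ volume (SA ∪ (Set.Ioc 0 m ×ˢ Set.Ioc 0 T)) :=
        measure_mono hsub
    _ ≤ volume SA + volume (Set.Ioc (0:ℝ) m ×ˢ Set.Ioc (0:ℝ) T) := measure_union_le _ _
    _ ≤ ENNReal.ofReal m * ENNReal.ofReal T + ENNReal.ofReal m * ENNReal.ofReal T := by
        rw [hBvol]; exact add_le_add hSAvol le_rfl
    _ = ENNReal.ofReal (2 * T * m) := by
        rw [← ENNReal.ofReal_mul hm0.le, ← ENNReal.ofReal_add (by positivity) (by positivity)]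
        congr 1; ring

private lemma Gcov_cont (H ε δ : ℝ) (hH0 : (0:ℝ) ≤ 2*H) (p : ℝ) (hp : 0 ≤ p) :
    Continuous (fun z : ℝ × ℝ => |Gcov H ε δ z.1 z.2 / (ε * δ)| ^ p) := by
  have habs : ∀ g : ℝ × ℝ → ℝ, Continuous g →
      Continuous (fun z => |g z| ^ (2*H)) := fun g hg =>
    hg.abs.rpow_const (fun z => Or.inr hH0)
  apply Continuous.rpow_const _ (fun z => Or.inr hp)
  apply Continuous.abs
  apply Continuous.div_const
  unfold Gcov
  apply Continuous.div_const
  exact (((habs _ (by fun_prop)).add (habs _ (by fun_prop))).sub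
    (habs _ (by fun_prop))).sub (habs _ (by fun_prop))

private lemma key_bound {H : ℝ} (hH : H ∈ Set.Ioo (1/2 : ℝ) 1) {T : ℝ} (hT : 0 < T)
    {p : ℝ} (hp1 : 1 ≤ p) {ε δ : ℝ} (hε : ε ∈ Set.Ioo (0:ℝ) 1) (hδ : δ ∈ Set.Ioo (0:ℝ) 1) :
    (∫ z in diagSet T ε δ, |Gcov H ε δ z.1 z.2 / (ε*δ)| ^ p)
      ≤ ((2*H) ^ p * (2*T)) * (min ε δ) ^ ((2*H-2)*p + 1) := by
  obtain ⟨hH1, hH2⟩ := hH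
  set m : ℝ := min ε δ with hm
  have hm0 : 0 < m := lt_min hε.1 hδ.1
  have hp0 : (0:ℝ) ≤ p := by linarith
  set K : ℝ := (2*H) * m ^ (2*H - 2) with hK
  have hK0 : 0 ≤ K := by positivity
  have hvol := diagSet_vol' hm hm0 hT
  have hfin : volume (diagSet T ε δ) < ⊤ := lt_of_le_of_lt hvol ENNReal.ofReal_lt_top
  have hptw : ∀ z ∈ diagSet T ε δ, ‖|Gcov H ε δ z.1 z.2 / (ε*δ)| ^ p‖ ≤ K ^ p := by
    intro z _
    rw [Real.norm_eq_abs, abs_of_nonneg (Real.rpow_nonneg (abs_nonneg _) p)]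
    exact Real.rpow_le_rpow (abs_nonneg _) (Gcov_div_le' ⟨hH1, hH2⟩ hε.1 hδ.1 z.1 z.2) hp0
  have hmeas := ((Gcov_cont H ε δ (by linarith) p hp0).aestronglyMeasurable
    (μ := volume)).restrict (s := diagSet T ε δ)
  have hle := norm_setIntegral_le_of_norm_le_const hfin hptw
  have htoReal : (volume (diagSet T ε δ)).toReal ≤ 2 * T * m :=
    ENNReal.toReal_le_of_le_ofReal (by positivity) hvol
  calc (∫ z in diagSet T ε δ, |Gcov H ε δ z.1 z.2 / (ε*δ)| ^ p)
      ≤ ‖∫ z in diagSet T ε δ, |Gcov H ε δ z.1 z.2 / (ε*δ)| ^ p‖ := le_norm_self _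
    _ ≤ K ^ p * (volume (diagSet T ε δ)).toReal := hle
    _ ≤ K ^ p * (2 * T * m) :=
        mul_le_mul_of_nonneg_left htoReal (Real.rpow_nonneg hK0 p)
    _ = ((2*H) ^ p * (2*T)) * m ^ ((2*H-2)*p + 1) := by
        rw [hK, Real.mul_rpow (by linarith) (Real.rpow_nonneg hm0.le _),
          ← Real.rpow_mul hm0.le, Real.rpow_add_one hm0.ne' ((2*H-2)*p)]
        ring

/-- For `H ∈ (1/2,1)`, `T > 0`, `1 ≤ p < 1/(2−2H)`, there is a constant
`C = C(H,p,T)` with `∫_{Δ¹_T(ε,δ)} |G(ε,δ;s,t)/(εδ)|^p ds dt ≤ C (ε∧δ)^{(2H−2)p+1}` for all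
`ε,δ ∈ (0,1)`; in particular, since `(2H−2)p+1 > 0`, this integral tends to `0` as
`(ε,δ) ↓ 0`. -/
theorem statement10 (H : ℝ) (hH : H ∈ Set.Ioo (1/2 : ℝ) 1) (T : ℝ) (hT : 0 < T)
    (p : ℝ) (hp1 : 1 ≤ p) (hp2 : p < 1/(2-2*H)) :
    (∃ C : ℝ, 0 < C ∧ ∀ ε δ : ℝ, ε ∈ Set.Ioo (0:ℝ) 1 → δ ∈ Set.Ioo (0:ℝ) 1 →
      (∫ z in diagSet T ε δ, |Gcov H ε δ z.1 z.2 / (ε*δ)| ^ p)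
        ≤ C * (min ε δ) ^ ((2*H-2)*p + 1)) ∧
    (2*H-2)*p + 1 > 0 ∧
    Tendsto (fun ed : ℝ × ℝ =>
        ∫ z in diagSet T ed.1 ed.2, |Gcov H ed.1 ed.2 z.1 z.2 / (ed.1*ed.2)| ^ p)
      ((𝓝[>] (0:ℝ)) ×ˢ (𝓝[>] (0:ℝ))) (𝓝 0) := by
  obtain ⟨hH1, hH2⟩ := hH
  have hγ : (0:ℝ) < (2*H-2)*p + 1 := by
    have h2H : (0:ℝ) < 2 - 2*H := by linarith
    have := (lt_div_iff₀ h2H).1 (by rwa [div_eq_mul_inv, one_mul, ← one_div] at hp2)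
    nlinarith
  set C : ℝ := (2*H) ^ p * (2*T) with hC
  have hC0 : 0 < C := by
    have : (0:ℝ) < 2*H := by linarith
    positivity
  have hkey : ∀ ε δ : ℝ, ε ∈ Set.Ioo (0:ℝ) 1 → δ ∈ Set.Ioo (0:ℝ) 1 →
      (∫ z in diagSet T ε δ, |Gcov H ε δ z.1 z.2 / (ε*δ)| ^ p)
        ≤ C * (min ε δ) ^ ((2*H-2)*p + 1) :=
    fun ε δ hε hδ => key_bound ⟨hH1, hH2⟩ hT hp1 hε hδ
  refine ⟨⟨C, hC0, hkey⟩, hγ, ?_⟩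
  set l : Filter (ℝ × ℝ) := (𝓝[>] (0:ℝ)) ×ˢ (𝓝[>] (0:ℝ)) with hl
  have hev : ∀ᶠ ed : ℝ × ℝ in l, ed.1 ∈ Set.Ioo (0:ℝ) 1 ∧ ed.2 ∈ Set.Ioo (0:ℝ) 1 := by
    have h1 : Set.Ioo (0:ℝ) 1 ∈ 𝓝[>] (0:ℝ) :=
      Ioo_mem_nhdsGT_of_mem ⟨le_refl 0, zero_lt_one⟩
    exact Filter.eventually_of_mem (Filter.prod_mem_prod h1 h1) (fun ed h => h)
  apply squeeze_zero'
  · exact Filter.Eventually.of_forall fun ed =>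
      integral_nonneg fun z => Real.rpow_nonneg (abs_nonneg _) p
  · filter_upwards [hev] with ed hed
    exact hkey ed.1 ed.2 hed.1 hed.2
  · have hmin : Tendsto (fun ed : ℝ × ℝ => min ed.1 ed.2) l (𝓝 0) := by
      have h1 : Tendsto (fun ed : ℝ × ℝ => ed.1) l (𝓝 0) :=
        (Filter.tendsto_fst).mono_right nhdsWithin_le_nhds
      have h2 : Tendsto (fun ed : ℝ × ℝ => ed.2) l (𝓝 0) :=
        (Filter.tendsto_snd).mono_right nhdsWithin_le_nhds
      simpa using h1.min h2
    have hrpow : Tendsto (fun x : ℝ => x ^ ((2*H-2)*p + 1)) (𝓝 0) (𝓝 0) := by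
      have hc := Real.continuousAt_rpow_const 0 ((2*H-2)*p + 1) (Or.inr hγ.le)
      have := hc.tendsto
      simpa [Real.zero_rpow hγ.ne'] using this
    have := (hrpow.comp hmin).const_mul C
    simpa [Function.comp] using this
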